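/- arXiv:1207.4470 — 11 statements merged into one kernel-verified Lean document; each statement's English description precedes it below -/
import Mathlib

section
/- For all u, v ∈ ℝ⁷, ‖u × v‖² = ‖u‖²‖v‖² − g₀(u, v)², where ‖·‖ is the norm of the standard inner product g₀. -/
open scoped RealInnerProductSpace

noncomputable section

abbrev E7 : Type := EuclideanSpace ℝ (Fin 7)

/-- `dxⁱ ∧ dxʲ ∧ dxᵏ` evaluated on the triple `(u, v, w)`. -/
def triDet (u v w : E7) (i j k : Fin 7) : ℝ :=
  Matrix.det !![u i, u j, u k; v i, v j, v k; w i, w j, w k]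

/-- The standard G₂ 3-form `φ₀ = dx¹²³ + dx¹⁴⁵ + dx¹⁶⁷ + dx²⁴⁶ − dx²⁵⁷ − dx³⁴⁷ − dx³⁵⁶`
(here with 0-indexed coordinates). -/
def phi0 (u v w : E7) : ℝ :=
  triDet u v w 0 1 2 + triDet u v w 0 3 4 + triDet u v w 0 5 6 +
    triDet u v w 1 3 5 - triDet u v w 1 4 6 - triDet u v w 2 3 6 - triDet u v w 2 4 5

lemma triDet_apply (u v w : E7) (i j k : Fin 7) : triDet u v w i j k =
    u i * v j * w k - u i * v k * w j - u j * v i * w k + u j * v k * w i +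
      u k * v i * w j - u k * v j * w i := by
  simp [triDet, Matrix.det_fin_three]

lemma comp (cross : E7 → E7 → E7)
    (hcross : ∀ a b c : E7, ⟪cross a b, c⟫ = phi0 a b c)
    (u v : E7) (i : Fin 7) :
    cross u v i = phi0 u v (EuclideanSpace.single i 1) := by
  rw [← hcross]
  simp [EuclideanSpace.inner_single_right, real_inner_comm]

lemma e0 (u v : E7) : phi0 u v (EuclideanSpace.single 0 1) =
    u 1 * v 2 - u 2 * v 1 + (u 3 * v 4 - u 4 * v 3) + (u 5 * v 6 - u 6 * v 5) := by
  simp [phi0, triDet, Matrix.det_fin_three, EuclideanSpace.single_apply]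

lemma e1 (u v : E7) : phi0 u v (EuclideanSpace.single 1 1) =
    -(u 0 * v 2) + u 2 * v 0 + (u 3 * v 5 - u 5 * v 3) - (u 4 * v 6 - u 6 * v 4) := by
  simp [phi0, triDet, Matrix.det_fin_three, EuclideanSpace.single_apply]

lemma e2 (u v : E7) : phi0 u v (EuclideanSpace.single 2 1) =
    u 0 * v 1 - u 1 * v 0 - (u 3 * v 6 - u 6 * v 3) - (u 4 * v 5 - u 5 * v 4) := by
  simp [phi0, triDet, Matrix.det_fin_three, EuclideanSpace.single_apply]

lemma e3 (u v : E7) : phi0 u v (EuclideanSpace.single 3 1) =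
    -(u 0 * v 4) + u 4 * v 0 + (-(u 1 * v 5) + u 5 * v 1) - (-(u 2 * v 6) + u 6 * v 2) := by
  simp [phi0, triDet, Matrix.det_fin_three, EuclideanSpace.single_apply]

lemma e4 (u v : E7) : phi0 u v (EuclideanSpace.single 4 1) =
    u 0 * v 3 - u 3 * v 0 - (-(u 1 * v 6) + u 6 * v 1) - (-(u 2 * v 5) + u 5 * v 2) := by
  simp [phi0, triDet, Matrix.det_fin_three, EuclideanSpace.single_apply]

lemma e5 (u v : E7) : phi0 u v (EuclideanSpace.single 5 1) =
    -(u 0 * v 6) + u 6 * v 0 + (u 1 * v 3 - u 3 * v 1) - (u 2 * v 4 - u 4 * v 2) := by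
  simp [phi0, triDet, Matrix.det_fin_three, EuclideanSpace.single_apply]

lemma e6 (u v : E7) : phi0 u v (EuclideanSpace.single 6 1) =
    u 0 * v 5 - u 5 * v 0 - (u 1 * v 4 - u 4 * v 1) - (u 2 * v 3 - u 3 * v 2) := by
  simp [phi0, triDet, Matrix.det_fin_three, EuclideanSpace.single_apply]

set_option maxHeartbeats 2000000 in
/-- For all `u, v ∈ ℝ⁷`, `‖u × v‖² = ‖u‖²‖v‖² − g₀(u, v)²`, where `×` is the cross
product determined by `g₀(u × v, w) = φ₀(u, v, w)`. -/
theorem statement0 (cross : E7 → E7 → E7)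
    (hcross : ∀ a b c : E7, ⟪cross a b, c⟫ = phi0 a b c)
    (u v : E7) :
    ‖cross u v‖ ^ 2 = ‖u‖ ^ 2 * ‖v‖ ^ 2 - ⟪u, v⟫ ^ 2 := by
  rw [← real_inner_self_eq_norm_sq, ← real_inner_self_eq_norm_sq,
    ← real_inner_self_eq_norm_sq, hcross]
  simp only [phi0, triDet_apply]
  simp only [comp cross hcross u v, e0, e1, e2, e3, e4, e5, e6]
  simp only [PiLp.inner_apply, RCLike.inner_apply, conj_trivial, Fin.sum_univ_seven]
  ring
end
end

section
/- For all u, v, w ∈ ℝ⁷, u × (v × w) + (u × v) × w = 2 g₀(u, w) v − g₀(u, v) w − g₀(w, v) u. -/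
open scoped RealInnerProductSpace

noncomputable section

/-- For all `u, v, w ∈ ℝ⁷`,
`u × (v × w) + (u × v) × w = 2 g₀(u, w) v − g₀(u, v) w − g₀(w, v) u`. -/
theorem statement1 (cross : E7 → E7 → E7)
    (hcross : ∀ a b c : E7, ⟪cross a b, c⟫ = phi0 a b c)
    (u v w : E7) :
    cross u (cross v w) + cross (cross u v) w =
      (2 * ⟪u, w⟫) • v - ⟪u, v⟫ • w - ⟪w, v⟫ • u := by
  have h0 : ∀ a b : E7, cross a b 0 = a 1 * b 2 - a 2 * b 1 + a 3 * b 4 - a 4 * b 3 + a 5 * b 6 - a 6 * b 5 := by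
    intro a b
    have h := hcross a b (EuclideanSpace.single 0 1)
    simp [EuclideanSpace.inner_single_right] at h
    rw [h, phi0]
    simp [triDet, Matrix.det_fin_three, EuclideanSpace.single_apply]
    ring
  have h1 : ∀ a b : E7, cross a b 1 = - a 0 * b 2 + a 2 * b 0 + a 3 * b 5 - a 5 * b 3 - a 4 * b 6 + a 6 * b 4 := by
    intro a b
    have h := hcross a b (EuclideanSpace.single 1 1)
    simp [EuclideanSpace.inner_single_right] at h
    rw [h, phi0]
    simp [triDet, Matrix.det_fin_three, EuclideanSpace.single_apply]
    ring
  have h2 : ∀ a b : E7, cross a b 2 = a 0 * b 1 - a 1 * b 0 - a 3 * b 6 + a 6 * b 3 - a 4 * b 5 + a 5 * b 4 := by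
    intro a b
    have h := hcross a b (EuclideanSpace.single 2 1)
    simp [EuclideanSpace.inner_single_right] at h
    rw [h, phi0]
    simp [triDet, Matrix.det_fin_three, EuclideanSpace.single_apply]
    ring
  have h3 : ∀ a b : E7, cross a b 3 = - a 0 * b 4 + a 4 * b 0 - a 1 * b 5 + a 5 * b 1 + a 2 * b 6 - a 6 * b 2 := by
    intro a b
    have h := hcross a b (EuclideanSpace.single 3 1)
    simp [EuclideanSpace.inner_single_right] at h
    rw [h, phi0]
    simp [triDet, Matrix.det_fin_three, EuclideanSpace.single_apply]
    ring
  have h4 : ∀ a b : E7, cross a b 4 = a 0 * b 3 - a 3 * b 0 + a 1 * b 6 - a 6 * b 1 + a 2 * b 5 - a 5 * b 2 := by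
    intro a b
    have h := hcross a b (EuclideanSpace.single 4 1)
    simp [EuclideanSpace.inner_single_right] at h
    rw [h, phi0]
    simp [triDet, Matrix.det_fin_three, EuclideanSpace.single_apply]
    ring
  have h5 : ∀ a b : E7, cross a b 5 = - a 0 * b 6 + a 6 * b 0 + a 1 * b 3 - a 3 * b 1 - a 2 * b 4 + a 4 * b 2 := by
    intro a b
    have h := hcross a b (EuclideanSpace.single 5 1)
    simp [EuclideanSpace.inner_single_right] at h
    rw [h, phi0]
    simp [triDet, Matrix.det_fin_three, EuclideanSpace.single_apply]
    ring
  have h6 : ∀ a b : E7, cross a b 6 = a 0 * b 5 - a 5 * b 0 - a 1 * b 4 + a 4 * b 1 - a 2 * b 3 + a 3 * b 2 := by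
    intro a b
    have h := hcross a b (EuclideanSpace.single 6 1)
    simp [EuclideanSpace.inner_single_right] at h
    rw [h, phi0]
    simp [triDet, Matrix.det_fin_three, EuclideanSpace.single_apply]
    ring
  ext i
  fin_cases i <;>
  · simp only [PiLp.add_apply, PiLp.sub_apply, PiLp.smul_apply, smul_eq_mul,
      Fin.isValue, Fin.reduceFinMk, h0, h1, h2, h3, h4, h5, h6,
      PiLp.inner_apply, RCLike.inner_apply, conj_trivial, Fin.sum_univ_seven]
    ring
end
end

section
/- For all u, v, w ∈ ℝ⁷, φ₀(u, v, w)² + ¼‖χ₀(u, v, w)‖² = |u∧v∧w|², where |u∧v∧w|² denotes the Gram determinant det(g₀(aᵢ, aⱼ)) for (a₁, a₂, a₃) = (u, v, w). -/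
open scoped RealInnerProductSpace

noncomputable section

/-- `dxⁱ ∧ dxʲ ∧ dxᵏ ∧ dxˡ` evaluated on the quadruple `(u, v, w, x)`. -/
def quadDet (u v w x : E7) (i j k l : Fin 7) : ℝ :=
  Matrix.det !![u i, u j, u k, u l; v i, v j, v k, v l;
                w i, w j, w k, w l; x i, x j, x k, x l]

/-- The 4-form `ψ₀ = −dx¹²⁴⁷ − dx¹²⁵⁶ − dx¹³⁴⁶ + dx¹³⁵⁷ + dx²³⁴⁵ + dx²³⁶⁷ + dx⁴⁵⁶⁷`
(here with 0-indexed coordinates). -/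
def psi0 (u v w x : E7) : ℝ :=
  -quadDet u v w x 0 1 3 6 - quadDet u v w x 0 1 4 5 - quadDet u v w x 0 2 3 5 +
    quadDet u v w x 0 2 4 6 + quadDet u v w x 1 2 3 4 + quadDet u v w x 1 2 5 6 +
    quadDet u v w x 3 4 5 6

/-!
Write `p_{ijk} = dxⁱʲᵏ(u, v, w)` for the Plücker coordinates of `u ∧ v ∧ w`. By Cauchy–Binet the
Gram determinant is `∑_{i<j<k} p_{ijk}²`. In these coordinates `φ₀(u, v, w)` is a signed sum of
seven of the `p_{ijk}`, and each coordinate `ψ₀(eᵢ, u, v, w)` of `½χ₀(u, v, w)` is a signed sum of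
four of the remaining 28, so the squares account for every `p_{ijk}²` exactly once. The 63 cross
terms group into 21 three-term Plücker relations `p_{abc}p_{ade} - p_{abd}p_{ace} + p_{abe}p_{acd} = 0`,
three for each common index `a`.
-/

theorem triDet_expand (u v w : E7) (i j k : Fin 7) : triDet u v w i j k =
    u i * (v j * w k - v k * w j) - u j * (v i * w k - v k * w i)
      + u k * (v i * w j - v j * w i) := by
  simp only [triDet, Matrix.det_fin_three, Matrix.of_apply, Matrix.cons_val', Matrix.cons_val_zero,
    Matrix.cons_val_fin_one, Matrix.cons_val_one, Matrix.cons_val]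
  ring

-- Stated for `j < i` so that, as `simp` lemmas, these two rewrites terminate by sorting the indices.
theorem triDet_swap_of_lt_left (u v w : E7) {i j : Fin 7} (k : Fin 7) (_ : j < i) :
    triDet u v w i j k = -triDet u v w j i k := by
  simp only [triDet_expand]; ring

theorem triDet_swap_of_lt_right (u v w : E7) (i : Fin 7) {j k : Fin 7} (_ : k < j) :
    triDet u v w i j k = -triDet u v w i k j := by
  simp only [triDet_expand]; ring

theorem triDet_plucker (u v w : E7) (a b c d e : Fin 7) :
    triDet u v w a b c * triDet u v w a d e - triDet u v w a b d * triDet u v w a c e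
      + triDet u v w a b e * triDet u v w a c d = 0 := by
  simp only [triDet_expand]; ring

theorem quadDet_expand_row_zero (x u v w : E7) (a b c d : Fin 7) :
    quadDet x u v w a b c d = x a * triDet u v w b c d - x b * triDet u v w a c d
      + x c * triDet u v w a b d - x d * triDet u v w a b c := by
  simp [quadDet, triDet, Matrix.det_succ_row_zero, Fin.sum_univ_succ, Fin.succAbove]
  ring

theorem gram_det_eq_sum_sq_triDet (u v w : E7) :
    Matrix.det !![⟪u, u⟫, ⟪u, v⟫, ⟪u, w⟫; ⟪v, u⟫, ⟪v, v⟫, ⟪v, w⟫; ⟪w, u⟫, ⟪w, v⟫, ⟪w, w⟫] =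
      ∑ i : Fin 7, ∑ j : Fin 7, ∑ k : Fin 7,
        if i < j ∧ j < k then triDet u v w i j k ^ 2 else 0 := by
  simp only [Fin.sum_univ_seven, Fin.reduceLT, and_true, and_false, if_true, if_false, add_zero, zero_add]
  simp only [triDet_expand, Matrix.det_fin_three, Matrix.of_apply, Matrix.cons_val', Matrix.cons_val_zero,
    Matrix.cons_val_fin_one, Matrix.cons_val_one, Matrix.cons_val, PiLp.inner_apply, RCLike.inner_apply,
    Real.ringHom_apply, Fin.sum_univ_seven]
  ring

theorem phi0_sq_add_sum_sq_psi0_single (u v w : E7) :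
    phi0 u v w ^ 2 + ∑ i : Fin 7, psi0 (EuclideanSpace.single i 1) u v w ^ 2 =
      ∑ i : Fin 7, ∑ j : Fin 7, ∑ k : Fin 7,
        if i < j ∧ j < k then triDet u v w i j k ^ 2 else 0 := by
  have P := triDet_plucker u v w
  simp only [Fin.sum_univ_seven, Fin.reduceLT, and_true, and_false, if_true, if_false, add_zero, zero_add]
  simp only [phi0, psi0, quadDet_expand_row_zero, PiLp.single_eq_same, PiLp.single_eq_of_ne, ne_eq,
    Fin.reduceEq, not_false_eq_true, one_mul, zero_mul, add_zero, zero_add, sub_zero, zero_sub,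
    sub_self, neg_zero]
  linear_combination (norm := (simp only [triDet_swap_of_lt_left, triDet_swap_of_lt_right, Fin.reduceLT]; ring1))
    2 * P 0 1 2 3 4 + 2 * P 0 1 2 5 6 + 2 * P 0 3 4 5 6 - 2 * P 1 0 2 3 5 + 2 * P 1 0 2 4 6
    + 2 * P 1 3 4 5 6 - 2 * P 2 0 1 3 6 - 2 * P 2 0 1 4 5 + 2 * P 2 3 4 5 6 - 2 * P 3 0 1 4 5
    + 2 * P 3 0 2 4 6 + 2 * P 3 1 2 5 6 - 2 * P 4 0 1 3 6 - 2 * P 4 0 2 3 5 + 2 * P 4 1 2 5 6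
    - 2 * P 5 0 1 3 6 + 2 * P 5 0 2 4 6 + 2 * P 5 1 2 3 4 - 2 * P 6 0 1 4 5 - 2 * P 6 0 2 3 5
    + 2 * P 6 1 2 3 4

/-- For all `u, v, w ∈ ℝ⁷`, `φ₀(u,v,w)² + ¼‖χ₀(u,v,w)‖² = |u∧v∧w|²`, where `|u∧v∧w|²`
is the Gram determinant and `χ₀` is determined by `g₀(u, ½χ₀(v,w,x)) = ψ₀(u,v,w,x)`. -/
theorem statement2 (chi : E7 → E7 → E7 → E7)
    (hchi : ∀ a b c d : E7, ⟪a, (1/2 : ℝ) • chi b c d⟫ = psi0 a b c d)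
    (u v w : E7) :
    phi0 u v w ^ 2 + (1/4 : ℝ) * ‖chi u v w‖ ^ 2 =
      Matrix.det !![⟪u, u⟫, ⟪u, v⟫, ⟪u, w⟫;
                    ⟪v, u⟫, ⟪v, v⟫, ⟪v, w⟫;
                    ⟪w, u⟫, ⟪w, v⟫, ⟪w, w⟫] := by
  have chi_apply (i : Fin 7) : chi u v w i = 2 * psi0 (EuclideanSpace.single i 1) u v w := by
    have h := hchi (EuclideanSpace.single i 1) u v w
    rw [EuclideanSpace.inner_single_left, map_one, one_mul, PiLp.smul_apply, smul_eq_mul] at h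
    linarith
  rw [gram_det_eq_sum_sq_triDet, ← phi0_sq_add_sum_sq_psi0_single, EuclideanSpace.real_norm_sq_eq,
    Finset.mul_sum]
  congr 1
  exact Finset.sum_congr rfl fun i _ => by rw [chi_apply]; ring
end
end

section
/- The 3-form φ₀ is a calibration on (ℝ⁷, g₀): for any orthonormal triple u, v, w ∈ ℝ⁷ one has |φ₀(u, v, w)| ≤ 1; moreover, for an orthonormal triple u, v, w, φ₀(u, v, w) = 1 if and only if w = u × v. -/
open scoped RealInnerProductSpace

noncomputable section

lemma phi0_eq (u v w : E7) : phi0 u v w = (u 0*v 1*w 2 - u 0*v 2*w 1 - u 1*v 0*w 2 + u 1*v 2*w 0 + u 2*v 0*w 1 - u 2*v 1*w 0) + (u 0*v 3*w 4 - u 0*v 4*w 3 - u 3*v 0*w 4 + u 3*v 4*w 0 + u 4*v 0*w 3 - u 4*v 3*w 0) + (u 0*v 5*w 6 - u 0*v 6*w 5 - u 5*v 0*w 6 + u 5*v 6*w 0 + u 6*v 0*w 5 - u 6*v 5*w 0) + (u 1*v 3*w 5 - u 1*v 5*w 3 - u 3*v 1*w 5 + u 3*v 5*w 1 + u 5*v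 1*w 3 - u 5*v 3*w 1) - (u 1*v 4*w 6 - u 1*v 6*w 4 - u 4*v 1*w 6 + u 4*v 6*w 1 + u 6*v 1*w 4 - u 6*v 4*w 1) - (u 2*v 3*w 6 - u 2*v 6*w 3 - u 3*v 2*w 6 + u 3*v 6*w 2 + u 6*v 2*w 3 - u 6*v 3*w 2) - (u 2*v 4*w 5 - u 2*v 5*w 4 - u 4*v 2*w 5 + u 4*v 5*w 2 + u 5*v 2*w 4 - u 5*v 4*w 2) := by
  simp [phi0, triDet, Matrix.det_fin_three]

set_option maxHeartbeats 1000000 in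
lemma key (u v : E7) :
    ∑ i, (phi0 u v (EuclideanSpace.single i 1))^2 = ⟪u,u⟫ * ⟪v,v⟫ - ⟪u,v⟫^2 := by
  simp only [phi0_eq, Fin.sum_univ_seven, EuclideanSpace.single_apply, Fin.reduceEq,
    PiLp.inner_apply, RCLike.inner_apply, conj_trivial, if_true, if_false, mul_one, mul_zero,
    sub_zero, zero_sub, add_zero, zero_add, mul_neg, neg_neg, neg_zero]
  ring

/-- `φ₀` is a calibration: for any orthonormal triple `u, v, w`, `|φ₀(u,v,w)| ≤ 1`;
moreover `φ₀(u,v,w) = 1` if and only if `w = u × v`. -/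
theorem statement3 (cross : E7 → E7 → E7)
    (hcross : ∀ a b c : E7, ⟪cross a b, c⟫ = phi0 a b c)
    (u v w : E7)
    (hu : ‖u‖ = 1) (hv : ‖v‖ = 1) (hw : ‖w‖ = 1)
    (huv : ⟪u, v⟫ = 0) (huw : ⟪u, w⟫ = 0) (hvw : ⟪v, w⟫ = 0) :
    |phi0 u v w| ≤ 1 ∧ (phi0 u v w = 1 ↔ w = cross u v) := by
  have hc : ∀ a b : E7, ⟪cross a b, cross a b⟫ = ⟪a,a⟫ * ⟪b,b⟫ - ⟪a,b⟫^2 := by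
    intro a b
    have hcomp : ∀ i, cross a b i = phi0 a b (EuclideanSpace.single i 1) := by
      intro i
      rw [← hcross]
      simp [EuclideanSpace.inner_single_right]
    calc ⟪cross a b, cross a b⟫ = ∑ i, (phi0 a b (EuclideanSpace.single i 1))^2 := by
          simp only [PiLp.inner_apply, RCLike.inner_apply, conj_trivial, hcomp, sq]
      _ = ⟪a,a⟫ * ⟪b,b⟫ - ⟪a,b⟫^2 := key a b
  have hcc : ⟪cross u v, cross u v⟫ = 1 := by
    rw [hc, real_inner_self_eq_norm_sq, real_inner_self_eq_norm_sq, hu, hv, huv]; ring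
  have hnorm : ‖cross u v‖ = 1 := by
    have h1 : ‖cross u v‖ ^ 2 = 1 := by rw [← real_inner_self_eq_norm_sq, hcc]
    nlinarith [norm_nonneg (cross u v)]
  have hphi : phi0 u v w = ⟪cross u v, w⟫ := (hcross u v w).symm
  constructor
  · rw [hphi]
    calc |⟪cross u v, w⟫| ≤ ‖cross u v‖ * ‖w‖ := abs_real_inner_le_norm _ _
      _ = 1 := by rw [hnorm, hw]; ring
  · constructor
    · intro h1
      have h2 : ⟪cross u v, w⟫ = ‖cross u v‖ * ‖w‖ := by
        rw [hnorm, hw, ← hphi, h1]; ring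
      have h3 := (inner_eq_norm_mul_iff_real).mp h2
      rw [hnorm, hw, one_smul, one_smul] at h3
      exact h3.symm
    · intro h1
      rw [hphi, h1, hcc]
end
end

section
/- An orthonormal triple u, v, w ∈ ℝ⁷ spans an associative 3-plane for one of its two orientations, i.e. |φ₀(u, v, w)| = 1, if and only if χ₀(u, v, w) = 0. -/
/-! Writing `½χ₀(u,v,w)` in coordinates as `(ψ₀(eᵢ,u,v,w))ᵢ`, one has the Harvey–Lawson
identity `φ₀(u,v,w)² + |½χ₀(u,v,w)|² = det Gram(u,v,w) = |u ∧ v ∧ w|²`, a polynomial identity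
in the 21 coordinates. For an orthonormal triple the right side is `1`, so `|φ₀(u,v,w)| = 1`
exactly when `χ₀(u,v,w)` vanishes. -/

open scoped RealInnerProductSpace

noncomputable section

open Matrix

lemma Matrix.det_fin_four {R : Type*} [CommRing R] (M : Matrix (Fin 4) (Fin 4) R) :
    M.det = M 0 0 * (M 1 1 * (M 2 2 * M 3 3 - M 2 3 * M 3 2)
                   - M 1 2 * (M 2 1 * M 3 3 - M 2 3 * M 3 1)
                   + M 1 3 * (M 2 1 * M 3 2 - M 2 2 * M 3 1))
          - M 0 1 * (M 1 0 * (M 2 2 * M 3 3 - M 2 3 * M 3 2)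
                   - M 1 2 * (M 2 0 * M 3 3 - M 2 3 * M 3 0)
                   + M 1 3 * (M 2 0 * M 3 2 - M 2 2 * M 3 0))
          + M 0 2 * (M 1 0 * (M 2 1 * M 3 3 - M 2 3 * M 3 1)
                   - M 1 1 * (M 2 0 * M 3 3 - M 2 3 * M 3 0)
                   + M 1 3 * (M 2 0 * M 3 1 - M 2 1 * M 3 0))
          - M 0 3 * (M 1 0 * (M 2 1 * M 3 2 - M 2 2 * M 3 1)
                   - M 1 1 * (M 2 0 * M 3 2 - M 2 2 * M 3 0)
                   + M 1 2 * (M 2 0 * M 3 1 - M 2 1 * M 3 0)) := by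
  rw [det_succ_row_zero, Fin.sum_univ_four]
  simp only [det_fin_three, submatrix_apply, Fin.succAbove, Fin.reduceSucc, Fin.reduceCastSucc,
    Fin.reduceLT, ↓reduceIte, Fin.coe_ofNat_eq_mod]
  ring

lemma phi0_sq_add_sum_psi0_single_sq (u v w : E7) :
    phi0 u v w ^ 2 + ∑ i, psi0 (EuclideanSpace.single i 1) u v w ^ 2 =
      (gram ℝ ![u, v, w]).det := by
  simp only [det_fin_three, det_fin_four, gram_apply, PiLp.inner_apply, RCLike.inner_apply,
    conj_trivial, Fin.sum_univ_seven, phi0, triDet, psi0, quadDet, PiLp.single_apply, of_apply,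
    cons_val_zero, cons_val_one, cons_val_two, cons_val_three, tail_cons, head_cons,
    Fin.reduceEq, ↓reduceIte]
  ring

lemma half_smul_apply_eq_psi0_single {chi : E7 → E7 → E7 → E7}
    (hchi : ∀ a b c d : E7, ⟪a, (1/2 : ℝ) • chi b c d⟫ = psi0 a b c d)
    (b c d : E7) (i : Fin 7) :
    ((1/2 : ℝ) • chi b c d) i = psi0 (EuclideanSpace.single i 1) b c d := by
  rw [← hchi, EuclideanSpace.inner_single_left, map_one, one_mul]

lemma phi0_sq_add_norm_half_smul_sq {chi : E7 → E7 → E7 → E7}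
    (hchi : ∀ a b c d : E7, ⟪a, (1/2 : ℝ) • chi b c d⟫ = psi0 a b c d) (u v w : E7) :
    phi0 u v w ^ 2 + ‖(1/2 : ℝ) • chi u v w‖ ^ 2 = (gram ℝ ![u, v, w]).det := by
  simp only [EuclideanSpace.real_norm_sq_eq, half_smul_apply_eq_psi0_single hchi,
    phi0_sq_add_sum_psi0_single_sq]

lemma orthonormal_vecCons_three {𝕜 E : Type*} [RCLike 𝕜] [SeminormedAddCommGroup E]
    [InnerProductSpace 𝕜 E] {u v w : E} (hu : ‖u‖ = 1) (hv : ‖v‖ = 1) (hw : ‖w‖ = 1)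
    (huv : inner 𝕜 u v = 0) (huw : inner 𝕜 u w = 0) (hvw : inner 𝕜 v w = 0) :
    Orthonormal 𝕜 ![u, v, w] := by
  rw [orthonormal_iff_ite]
  intro i j
  fin_cases i <;> fin_cases j <;>
    simp [inner_self_eq_norm_sq_to_K, hu, hv, hw, huv, huw, hvw, inner_eq_zero_symm.mp huv,
      inner_eq_zero_symm.mp huw, inner_eq_zero_symm.mp hvw]

/-- An orthonormal triple `u, v, w ∈ ℝ⁷` spans an associative 3-plane for one of its
two orientations, i.e. `|φ₀(u,v,w)| = 1`, if and only if `χ₀(u,v,w) = 0`. -/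
theorem statement5 (chi : E7 → E7 → E7 → E7)
    (hchi : ∀ a b c d : E7, ⟪a, (1/2 : ℝ) • chi b c d⟫ = psi0 a b c d)
    (u v w : E7)
    (hu : ‖u‖ = 1) (hv : ‖v‖ = 1) (hw : ‖w‖ = 1)
    (huv : ⟪u, v⟫ = 0) (huw : ⟪u, w⟫ = 0) (hvw : ⟪v, w⟫ = 0) :
    |phi0 u v w| = 1 ↔ chi u v w = 0 := by
  have hgram : gram ℝ ![u, v, w] = 1 :=
    gram_eq_one_iff_orthonormal.mpr (orthonormal_vecCons_three hu hv hw huv huw hvw)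
  have hsum := phi0_sq_add_norm_half_smul_sq hchi u v w
  rw [hgram, det_one] at hsum
  calc |phi0 u v w| = 1 ↔ phi0 u v w ^ 2 = 1 := by
        rw [← sq_eq_sq₀ (abs_nonneg _) zero_le_one, sq_abs, one_pow]
    _ ↔ ‖(1/2 : ℝ) • chi u v w‖ ^ 2 = 0 := by constructor <;> intro h <;> linarith
    _ ↔ chi u v w = 0 := by simp
end
end

section
/- Any 2-plane in ℝ⁷ is contained in a unique associative 3-plane: for orthonormal vectors u, v ∈ ℝ⁷, the span of {u, v, u × v} is a 3-dimensional subspace of ℝ⁷ admitting an orthonormal basis (w₁, w₂, w₃) with φ₀(w₁, w₂, w₃) = 1, and it is the unique 3-dimensional subspace of ℝ⁷ containing u and v with this property. -/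
open scoped RealInnerProductSpace

noncomputable section

/-- A 3-dimensional subspace `π ⊆ ℝ⁷` is associative if it admits an orthonormal basis
`(w₁, w₂, w₃)` with `φ₀(w₁, w₂, w₃) = 1`. -/
def IsAssociativePlane (π : Submodule ℝ E7) : Prop :=
  ∃ w₁ w₂ w₃ : E7, ‖w₁‖ = 1 ∧ ‖w₂‖ = 1 ∧ ‖w₃‖ = 1 ∧
    ⟪w₁, w₂⟫ = 0 ∧ ⟪w₁, w₃⟫ = 0 ∧ ⟪w₂, w₃⟫ = 0 ∧
    Submodule.span ℝ ({w₁, w₂, w₃} : Set E7) = π ∧ phi0 w₁ w₂ w₃ = 1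

/-! ### Auxiliary lemmas -/

lemma g2_triDet_eq (u v w : E7) (i j k : Fin 7) :
    triDet u v w i j k = u i*(v j*w k - v k*w j) - u j*(v i*w k - v k*w i) + u k*(v i*w j - v j*w i) := by
  simp [triDet, Matrix.det_fin_three, Matrix.vecHead, Matrix.vecTail]; ring

lemma g2_phi0_aab (a c : E7) : phi0 a a c = 0 := by
  simp only [phi0, g2_triDet_eq]; ring
lemma g2_phi0_aba (a b : E7) : phi0 a b a = 0 := by
  simp only [phi0, g2_triDet_eq]; ring
lemma g2_phi0_abb (a b : E7) : phi0 a b b = 0 := by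
  simp only [phi0, g2_triDet_eq]; ring
lemma g2_phi0_cyc (a b c : E7) : phi0 b c a = phi0 a b c := by
  simp only [phi0, g2_triDet_eq]; ring
lemma g2_phi0_swap (a b c : E7) : phi0 b a c = -phi0 a b c := by
  simp only [phi0, g2_triDet_eq]; ring
lemma g2_phi0_add_left (a a' b c : E7) : phi0 (a + a') b c = phi0 a b c + phi0 a' b c := by
  simp only [phi0, g2_triDet_eq, PiLp.add_apply]; ring
lemma g2_phi0_smul_left (r : ℝ) (a b c : E7) : phi0 (r • a) b c = r * phi0 a b c := by
  simp only [phi0, g2_triDet_eq, PiLp.smul_apply, smul_eq_mul]; ring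
lemma g2_phi0_add_mid (a b b' c : E7) : phi0 a (b + b') c = phi0 a b c + phi0 a b' c := by
  simp only [phi0, g2_triDet_eq, PiLp.add_apply]; ring
lemma g2_phi0_smul_mid (r : ℝ) (a b c : E7) : phi0 a (r • b) c = r * phi0 a b c := by
  simp only [phi0, g2_triDet_eq, PiLp.smul_apply, smul_eq_mul]; ring

lemma g2_cross_apply (cross : E7 → E7 → E7)
    (hcross : ∀ a b c : E7, ⟪cross a b, c⟫ = phi0 a b c) (a b : E7) (i : Fin 7) :
    cross a b i = phi0 a b (EuclideanSpace.single i 1) := by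
  have := hcross a b (EuclideanSpace.single i 1)
  simpa [EuclideanSpace.inner_single_right] using this

lemma g2_cross_add_left (cross : E7 → E7 → E7)
    (hcross : ∀ a b c : E7, ⟪cross a b, c⟫ = phi0 a b c) (a a' b : E7) :
    cross (a + a') b = cross a b + cross a' b := by
  ext i
  simp [g2_cross_apply cross hcross, g2_phi0_add_left]

lemma g2_cross_smul_left (cross : E7 → E7 → E7)
    (hcross : ∀ a b c : E7, ⟪cross a b, c⟫ = phi0 a b c) (r : ℝ) (a b : E7) :
    cross (r • a) b = r • cross a b := by
  ext i
  simp [g2_cross_apply cross hcross, g2_phi0_smul_left]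

lemma g2_cross_add_right (cross : E7 → E7 → E7)
    (hcross : ∀ a b c : E7, ⟪cross a b, c⟫ = phi0 a b c) (a b b' : E7) :
    cross a (b + b') = cross a b + cross a b' := by
  ext i
  simp [g2_cross_apply cross hcross, g2_phi0_add_mid]

lemma g2_cross_smul_right (cross : E7 → E7 → E7)
    (hcross : ∀ a b c : E7, ⟪cross a b, c⟫ = phi0 a b c) (r : ℝ) (a b : E7) :
    cross a (r • b) = r • cross a b := by
  ext i
  simp [g2_cross_apply cross hcross, g2_phi0_smul_mid]

lemma g2_cross_self (cross : E7 → E7 → E7)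
    (hcross : ∀ a b c : E7, ⟪cross a b, c⟫ = phi0 a b c) (a : E7) :
    cross a a = 0 := by
  ext i
  simp [g2_cross_apply cross hcross, g2_phi0_aab]

lemma g2_cross_anti (cross : E7 → E7 → E7)
    (hcross : ∀ a b c : E7, ⟪cross a b, c⟫ = phi0 a b c) (a b : E7) :
    cross b a = -cross a b := by
  ext i
  rw [g2_cross_apply cross hcross b a i, g2_phi0_swap]
  simp [g2_cross_apply cross hcross]

lemma g2_c0 (cross : E7 → E7 → E7)
    (hcross : ∀ a b c : E7, ⟪cross a b, c⟫ = phi0 a b c) (a b : E7) :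
    cross a b 0 = (a 1*b 2 - a 2*b 1) + (a 3*b 4 - a 4*b 3) + (a 5*b 6 - a 6*b 5) := by
  rw [g2_cross_apply cross hcross]
  simp [phi0, g2_triDet_eq, EuclideanSpace.single_apply]
  try ring
lemma g2_c1 (cross : E7 → E7 → E7)
    (hcross : ∀ a b c : E7, ⟪cross a b, c⟫ = phi0 a b c) (a b : E7) :
    cross a b 1 = -(a 0*b 2 - a 2*b 0) + (a 3*b 5 - a 5*b 3) - (a 4*b 6 - a 6*b 4) := by
  rw [g2_cross_apply cross hcross]
  simp [phi0, g2_triDet_eq, EuclideanSpace.single_apply]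
  try ring
lemma g2_c2 (cross : E7 → E7 → E7)
    (hcross : ∀ a b c : E7, ⟪cross a b, c⟫ = phi0 a b c) (a b : E7) :
    cross a b 2 = (a 0*b 1 - a 1*b 0) - (a 3*b 6 - a 6*b 3) - (a 4*b 5 - a 5*b 4) := by
  rw [g2_cross_apply cross hcross]
  simp [phi0, g2_triDet_eq, EuclideanSpace.single_apply]
  try ring
lemma g2_c3 (cross : E7 → E7 → E7)
    (hcross : ∀ a b c : E7, ⟪cross a b, c⟫ = phi0 a b c) (a b : E7) :
    cross a b 3 = -(a 0*b 4 - a 4*b 0) - (a 1*b 5 - a 5*b 1) + (a 2*b 6 - a 6*b 2) := by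
  rw [g2_cross_apply cross hcross]
  simp [phi0, g2_triDet_eq, EuclideanSpace.single_apply]
  try ring
lemma g2_c4 (cross : E7 → E7 → E7)
    (hcross : ∀ a b c : E7, ⟪cross a b, c⟫ = phi0 a b c) (a b : E7) :
    cross a b 4 = (a 0*b 3 - a 3*b 0) + (a 1*b 6 - a 6*b 1) + (a 2*b 5 - a 5*b 2) := by
  rw [g2_cross_apply cross hcross]
  simp [phi0, g2_triDet_eq, EuclideanSpace.single_apply]
  try ring
lemma g2_c5 (cross : E7 → E7 → E7)
    (hcross : ∀ a b c : E7, ⟪cross a b, c⟫ = phi0 a b c) (a b : E7) :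
    cross a b 5 = -(a 0*b 6 - a 6*b 0) + (a 1*b 3 - a 3*b 1) - (a 2*b 4 - a 4*b 2) := by
  rw [g2_cross_apply cross hcross]
  simp [phi0, g2_triDet_eq, EuclideanSpace.single_apply]
  try ring
lemma g2_c6 (cross : E7 → E7 → E7)
    (hcross : ∀ a b c : E7, ⟪cross a b, c⟫ = phi0 a b c) (a b : E7) :
    cross a b 6 = (a 0*b 5 - a 5*b 0) - (a 1*b 4 - a 4*b 1) - (a 2*b 3 - a 3*b 2) := by
  rw [g2_cross_apply cross hcross]
  simp [phi0, g2_triDet_eq, EuclideanSpace.single_apply]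
  try ring

lemma g2_lagrange (cross : E7 → E7 → E7)
    (hcross : ∀ a b c : E7, ⟪cross a b, c⟫ = phi0 a b c) (a b : E7) :
    ⟪cross a b, cross a b⟫ = ⟪a,a⟫ * ⟪b,b⟫ - ⟪a,b⟫^2 := by
  simp only [PiLp.inner_apply, RCLike.inner_apply, conj_trivial, Fin.sum_univ_seven,
    g2_c0 cross hcross, g2_c1 cross hcross, g2_c2 cross hcross, g2_c3 cross hcross,
    g2_c4 cross hcross, g2_c5 cross hcross, g2_c6 cross hcross]
  ring

lemma g2_norm_one_of_inner_self (c : E7) (h : ⟪c, c⟫ = 1) : ‖c‖ = 1 := by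
  have h2 : ‖c‖ ^ 2 = 1 := by rw [← real_inner_self_eq_norm_sq]; exact h
  nlinarith [norm_nonneg c]

/-- Norm of the cross product of two orthonormal vectors is 1. -/
lemma g2_cross_norm (cross : E7 → E7 → E7)
    (hcross : ∀ a b c : E7, ⟪cross a b, c⟫ = phi0 a b c) (a b : E7)
    (ha : ‖a‖ = 1) (hb : ‖b‖ = 1) (hab : ⟪a, b⟫ = 0) : ‖cross a b‖ = 1 := by
  apply g2_norm_one_of_inner_self
  rw [g2_lagrange cross hcross, real_inner_self_eq_norm_sq, real_inner_self_eq_norm_sq,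
    ha, hb, hab]
  norm_num

/-- Any 2-plane in `ℝ⁷` is contained in a unique associative 3-plane. -/
theorem statement6 (cross : E7 → E7 → E7)
    (hcross : ∀ a b c : E7, ⟪cross a b, c⟫ = phi0 a b c)
    (u v : E7) (hu : ‖u‖ = 1) (hv : ‖v‖ = 1) (huv : ⟪u, v⟫ = 0) :
    (Module.finrank ℝ (Submodule.span ℝ ({u, v, cross u v} : Set E7)) = 3 ∧
      IsAssociativePlane (Submodule.span ℝ ({u, v, cross u v} : Set E7))) ∧
    ∀ π : Submodule ℝ E7, Module.finrank ℝ π = 3 → u ∈ π → v ∈ π →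
      IsAssociativePlane π → π = Submodule.span ℝ ({u, v, cross u v} : Set E7) := by
  set w : E7 := cross u v with hw
  have hwnorm : ‖w‖ = 1 := g2_cross_norm cross hcross u v hu hv huv
  have hwu : ⟪w, u⟫ = 0 := by rw [hw, hcross]; exact g2_phi0_aba u v
  have hwv : ⟪w, v⟫ = 0 := by rw [hw, hcross]; exact g2_phi0_abb u v
  have huw : ⟪u, w⟫ = 0 := by rw [real_inner_comm]; exact hwu
  have hvw : ⟪v, w⟫ = 0 := by rw [real_inner_comm]; exact hwv
  have hphi : phi0 u v w = 1 := by
    rw [← hcross u v w]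
    have : ⟪w, w⟫ = 1 := by
      rw [real_inner_self_eq_norm_sq, hwnorm]; norm_num
    exact this
  have hvu : ⟪v, u⟫ = 0 := by rw [real_inner_comm]; exact huv
  -- orthonormality of the triple
  have honf : Orthonormal ℝ (![u, v, w] : Fin 3 → E7) := by
    constructor
    · intro i; fin_cases i <;> simpa [Matrix.cons_val_zero, Matrix.cons_val_one]
    · intro i j hij
      fin_cases i <;> fin_cases j <;>
        simp_all [Matrix.cons_val_zero, Matrix.cons_val_one, real_inner_comm]
  have hrange : Set.range (![u, v, w] : Fin 3 → E7) = ({u, v, w} : Set E7) := by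
    ext x
    simp [Fin.exists_fin_succ, Matrix.cons_val_zero, Matrix.cons_val_one, or_assoc]
    tauto
  have hfinrank : Module.finrank ℝ (Submodule.span ℝ ({u, v, w} : Set E7)) = 3 := by
    rw [← hrange]
    simpa using finrank_span_eq_card honf.linearIndependent
  have hassoc : IsAssociativePlane (Submodule.span ℝ ({u, v, w} : Set E7)) :=
    ⟨u, v, w, hu, hv, hwnorm, huv, huw, hvw, rfl, hphi⟩
  refine ⟨⟨hfinrank, hassoc⟩, ?_⟩
  -- uniqueness
  rintro π hπrank huπ hvπ ⟨w₁, w₂, w₃, n1, n2, n3, i12, i13, i23, hspan, hφ⟩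
  -- cross products of the basis
  have c12 : cross w₁ w₂ = w₃ := by
    refine (inner_eq_one_iff_of_norm_eq_one (𝕜 := ℝ)
      (g2_cross_norm cross hcross w₁ w₂ n1 n2 i12) n3).mp ?_
    rw [hcross]; exact hφ
  have c23 : cross w₂ w₃ = w₁ := by
    refine (inner_eq_one_iff_of_norm_eq_one (𝕜 := ℝ)
      (g2_cross_norm cross hcross w₂ w₃ n2 n3 i23) n1).mp ?_
    rw [hcross, g2_phi0_cyc]; exact hφ
  have c31 : cross w₃ w₁ = w₂ := by
    refine (inner_eq_one_iff_of_norm_eq_one (𝕜 := ℝ)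
      (g2_cross_norm cross hcross w₃ w₁ n3 n1 (by rw [real_inner_comm]; exact i13)) n2).mp ?_
    rw [hcross, g2_phi0_cyc, g2_phi0_cyc]; exact hφ
  have c21 : cross w₂ w₁ = -w₃ := by rw [g2_cross_anti cross hcross, c12]
  have c32 : cross w₃ w₂ = -w₁ := by rw [g2_cross_anti cross hcross, c23]
  have c13 : cross w₁ w₃ = -w₂ := by rw [g2_cross_anti cross hcross, c31]
  -- basis vectors belong to π
  have hw1 : w₁ ∈ π := hspan ▸ Submodule.subset_span (by simp)
  have hw2 : w₂ ∈ π := hspan ▸ Submodule.subset_span (by simp)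
  have hw3 : w₃ ∈ π := hspan ▸ Submodule.subset_span (by simp)
  -- closure of π under cross
  have hclosed : ∀ x ∈ π, ∀ y ∈ π, cross x y ∈ π := by
    intro x hx y hy
    rw [← hspan] at hx hy
    rw [Submodule.mem_span_insert] at hx
    obtain ⟨a₁, x', hx', hxeq⟩ := hx
    rw [Submodule.mem_span_insert] at hx'
    obtain ⟨a₂, x'', hx'', hxeq'⟩ := hx'
    rw [Submodule.mem_span_singleton] at hx''
    obtain ⟨a₃, hxeq''⟩ := hx''
    rw [Submodule.mem_span_insert] at hy
    obtain ⟨b₁, y', hy', hyeq⟩ := hy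
    rw [Submodule.mem_span_insert] at hy'
    obtain ⟨b₂, y'', hy'', hyeq'⟩ := hy'
    rw [Submodule.mem_span_singleton] at hy''
    obtain ⟨b₃, hyeq''⟩ := hy''
    subst hxeq'' hyeq'' hxeq' hyeq' hxeq hyeq
    simp only [g2_cross_add_left cross hcross, g2_cross_add_right cross hcross,
      g2_cross_smul_left cross hcross, g2_cross_smul_right cross hcross,
      g2_cross_self cross hcross, c12, c23, c31, c21, c32, c13,
      smul_zero, add_zero, zero_add, smul_neg]
    repeat
      first
        | exact hw1 | exact hw2 | exact hw3
        | apply Submodule.add_mem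
        | apply Submodule.neg_mem
        | apply Submodule.smul_mem
  have hcuv : cross u v ∈ π := hclosed u huπ v hvπ
  have hle : Submodule.span ℝ ({u, v, w} : Set E7) ≤ π := by
    refine Submodule.span_le.mpr ?_
    intro x hx
    simp only [Set.mem_insert_iff, Set.mem_singleton_iff] at hx
    rcases hx with rfl | rfl | rfl
    · exact huπ
    · exact hvπ
    · exact hcuv
  exact (Submodule.eq_of_le_of_finrank_le hle (by rw [hfinrank, hπrank])).symm
end
end

section
/- The stabiliser of the standard complex volume form Ω₀ in GL(2n, ℝ) is precisely SL(n, ℂ): an ℝ-linear automorphism g of ℂⁿ (viewed as ℝ^{2n}) satisfies Ω₀(g v₁, …, g vₙ) = Ω₀(v₁, …, vₙ) for all v₁, …, vₙ ∈ ℂⁿ if and only if g is ℂ-linear with complex determinant 1. -/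
noncomputable section

/-- `ℂⁿ` with its standard Hermitian inner product. -/
abbrev Cn (n : ℕ) : Type := EuclideanSpace ℂ (Fin n)

/-- The standard complex volume form `Ω₀ = dz¹∧⋯∧dzⁿ`: the determinant of the complex
`n×n` matrix with columns `v 0, …, v (n-1)`. -/
def OmegaC {n : ℕ} (v : Fin n → Cn n) : ℂ :=
  Matrix.det (Matrix.of fun i j => v j i)

/-- column matrix -/
def colMat {n : ℕ} (v : Fin n → Cn n) : Matrix (Fin n) (Fin n) ℂ :=
  Matrix.of fun i j => v j i

lemma omegaC_eq {n : ℕ} (v : Fin n → Cn n) : OmegaC v = (colMat v).det := rfl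

lemma colMat_update {n : ℕ} (v : Fin n → Cn n) (k : Fin n) (u : Cn n) :
    colMat (Function.update v k u) = (colMat v).updateCol k (fun i => u i) := by
  ext i j
  simp [colMat, Matrix.updateCol_apply, Function.update_apply]
  split <;> simp_all

lemma colMat_single {n : ℕ} :
    colMat (fun j : Fin n => (EuclideanSpace.single j 1 : Cn n)) = 1 := by
  ext i j
  simp [colMat, EuclideanSpace.single_apply, Matrix.one_apply, eq_comm]

/-- Multiplicativity: applying a ℂ-linear map to columns multiplies det by the map's det. -/
lemma omegaC_map {n : ℕ} (f : Cn n →ₗ[ℂ] Cn n) (v : Fin n → Cn n) :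
    OmegaC (fun j => f (v j)) = LinearMap.det f * OmegaC v := by
  classical
  set b := (EuclideanSpace.basisFun (Fin n) ℂ).toBasis with hb
  have hrepr : ∀ (x : Cn n) (i : Fin n), b.repr x i = x i := fun x i => rfl
  set M := LinearMap.toMatrix b b f with hM
  have hcol : colMat (fun j => f (v j)) = M * colMat v := by
    ext i j
    have := congrFun (LinearMap.toMatrix_mulVec_repr b b f (v j)) i
    simpa [Matrix.mulVec, dotProduct, hrepr, colMat, Matrix.mul_apply] using this.symm
  rw [omegaC_eq, omegaC_eq, hcol, Matrix.det_mul, ← LinearMap.det_toMatrix b f]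

/-- The stabiliser of `Ω₀` in `GL(2n, ℝ)` is precisely `SL(n, ℂ)`: an `ℝ`-linear
automorphism `g` of `ℂⁿ` preserves `Ω₀` if and only if `g` is `ℂ`-linear with complex
determinant 1. -/
theorem statement13 (n : ℕ) (g : Cn n ≃ₗ[ℝ] Cn n) :
    (∀ v : Fin n → Cn n, OmegaC (fun j => g (v j)) = OmegaC v) ↔
      ∃ g' : Cn n →ₗ[ℂ] Cn n, (∀ x, g' x = g x) ∧ LinearMap.det g' = 1 := by
  classical
  constructor
  · intro hΩ
    -- step 1: g commutes with multiplication by I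
    have hI : ∀ x : Cn n, g (Complex.I • x) = Complex.I • g x := by
      intro x
      have key : ∀ (k : Fin n) (c : Fin n → Cn n),
          ((colMat c).updateCol k (fun i => (g (Complex.I • x) - Complex.I • g x) i)).det
            = 0 := by
        intro k c
        have h1 := hΩ (Function.update (fun j => g.symm (c j)) k (Complex.I • x))
        have h2 := hΩ (Function.update (fun j => g.symm (c j)) k x)
        have e1 : (fun j => g (Function.update (fun j => g.symm (c j)) k (Complex.I • x) j))
            = Function.update c k (g (Complex.I • x)) := by
          ext j i
          by_cases h : j = k <;> simp [Function.update_apply, h]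
        have e2 : (fun j => g (Function.update (fun j => g.symm (c j)) k x j))
            = Function.update c k (g x) := by
          ext j i
          by_cases h : j = k <;> simp [Function.update_apply, h]
        rw [e1] at h1
        rw [e2] at h2
        -- RHS of h1 = I * RHS of h2
        have e3 : OmegaC (Function.update (fun j => g.symm (c j)) k (Complex.I • x))
            = Complex.I * OmegaC (Function.update (fun j => g.symm (c j)) k x) := by
          rw [omegaC_eq, omegaC_eq, colMat_update, colMat_update]
          have : (fun i => (Complex.I • x : Cn n) i) = Complex.I • (fun i => x i) := by
            ext i; simp
          rw [this, Matrix.det_updateCol_smul]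
        have h3 : OmegaC (Function.update c k (g (Complex.I • x)))
            = Complex.I * OmegaC (Function.update c k (g x)) := by
          rw [h1, e3, h2]
        have h4 : OmegaC (Function.update c k (Complex.I • g x))
            = Complex.I * OmegaC (Function.update c k (g x)) := by
          rw [omegaC_eq, omegaC_eq, colMat_update, colMat_update]
          have : (fun i => (Complex.I • g x : Cn n) i) = Complex.I • (fun i => (g x) i) := by
            ext i; simp
          rw [this, Matrix.det_updateCol_smul]
        have hsub : (fun i => (g (Complex.I • x) - Complex.I • g x : Cn n) i)
            = (fun i => (g (Complex.I • x) : Cn n) i) + (-1 : ℂ) • (fun i => (Complex.I • g x : Cn n) i) := by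
          ext i; simp; ring
        rw [hsub, Matrix.det_updateCol_add, Matrix.det_updateCol_smul]
        rw [omegaC_eq, colMat_update] at h3 h4
        rw [h3, h4]; ring
      -- nondegeneracy: take c = standard basis, update column k
      have : ∀ k : Fin n, (g (Complex.I • x) - Complex.I • g x : Cn n) k = 0 := by
        intro k
        have := key k (fun j => (EuclideanSpace.single j 1 : Cn n))
        rw [colMat_single, ← Matrix.cramer_apply, Matrix.cramer_one] at this
        simpa using this
      have h0 : g (Complex.I • x) - Complex.I • g x = 0 := by
        ext k; exact this k
      exact sub_eq_zero.mp h0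
    -- step 2: build the ℂ-linear map
    have hsmul : ∀ (c : ℂ) (x : Cn n), g (c • x) = c • g x := by
      intro c x
      have hre : ∀ (r : ℝ) (y : Cn n), (r : ℂ) • y = r • y := fun r y => by
        rw [Complex.coe_smul]
      have hdecomp : c • x = (c.re : ℝ) • x + (c.im : ℝ) • (Complex.I • x) := by
        rw [← hre, ← hre, smul_smul, ← add_smul]
        congr 1
        simp [Complex.ext_iff]
      have hdecomp2 : c • g x = (c.re : ℝ) • g x + (c.im : ℝ) • (Complex.I • g x) := by
        rw [← hre, ← hre, smul_smul, ← add_smul]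
        congr 1
        simp [Complex.ext_iff]
      rw [hdecomp, map_add, map_smul, map_smul, hI, hdecomp2]
    refine ⟨{ toFun := g, map_add' := g.map_add, map_smul' := hsmul }, fun x => rfl, ?_⟩
    set g' : Cn n →ₗ[ℂ] Cn n := { toFun := g, map_add' := g.map_add, map_smul' := hsmul }
    have h := omegaC_map g' (fun j => (EuclideanSpace.single j 1 : Cn n))
    have h2 := hΩ (fun j => (EuclideanSpace.single j 1 : Cn n))
    have hg'g : (fun j => g' ((EuclideanSpace.single j 1 : Cn n)))
        = fun j => g ((EuclideanSpace.single j 1 : Cn n)) := rfl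
    rw [hg'g, h2] at h
    rw [omegaC_eq, colMat_single, Matrix.det_one] at h
    simpa using h.symm
  · rintro ⟨g', hg', hdet⟩
    intro v
    have : (fun j => g (v j)) = fun j => g' (v j) := by
      ext j; rw [hg']
    rw [this, omegaC_map, hdet, one_mul]
end
end

section
/- G₂ acts transitively on the unit sphere S⁶ ⊂ ℝ⁷: for any unit vectors u, v ∈ ℝ⁷ there exists an ℝ-linear isometry A of (ℝ⁷, g₀) with A u = v and φ₀(Ax, Ay, Az) = φ₀(x, y, z) for all x, y, z ∈ ℝ⁷. -/
/-!
If `{0, k, a, b}` is the complement of an associative triple of `φ₀` (one of its seven terms),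
rotating the coordinate planes `(e₀, e_k)` and `(e_a, e_b)` by the same angle preserves `φ₀`.
Six such double rotations move any vector `u` to `‖u‖ e₀`, each one killing the coordinate `k`
with the rotation in `(e₀, e_k)`; the partner plane `(e_a, e_b)` lies either inside the current
support or outside it, so the coordinates killed earlier stay zero.
-/

open scoped RealInnerProductSpace

noncomputable section

namespace EuclideanSpace

variable {ι : Type*} [DecidableEq ι] {i j m : ι} {c s : ℝ}

def planeRot (i j : ι) (c s : ℝ) : EuclideanSpace ℝ ι →ₗ[ℝ] EuclideanSpace ℝ ι where
  toFun x := WithLp.toLp 2 fun m =>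
    if m = i then c * x i + s * x j else if m = j then -s * x i + c * x j else x m
  map_add' x y := by
    ext m
    simp only [PiLp.add_apply]
    split_ifs <;> ring
  map_smul' a x := by
    ext m
    simp only [PiLp.smul_apply, smul_eq_mul, RingHom.id_apply]
    split_ifs <;> ring

theorem planeRot_apply (x : EuclideanSpace ℝ ι) (m : ι) :
    planeRot i j c s x m =
      if m = i then c * x i + s * x j else if m = j then -s * x i + c * x j else x m :=
  rfl

theorem planeRot_apply_left (x : EuclideanSpace ℝ ι) :
    planeRot i j c s x i = c * x i + s * x j :=
  if_pos rfl

theorem planeRot_apply_right (hij : i ≠ j) (x : EuclideanSpace ℝ ι) :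
    planeRot i j c s x j = -s * x i + c * x j := by
  rw [planeRot_apply, if_neg hij.symm, if_pos rfl]

theorem planeRot_apply_of_ne (hi : m ≠ i) (hj : m ≠ j) (x : EuclideanSpace ℝ ι) :
    planeRot i j c s x m = x m := by
  rw [planeRot_apply, if_neg hi, if_neg hj]

theorem planeRot_neg_planeRot (hij : i ≠ j) (hcs : c ^ 2 + s ^ 2 = 1)
    (x : EuclideanSpace ℝ ι) : planeRot i j c (-s) (planeRot i j c s x) = x := by
  ext m
  simp only [planeRot_apply, if_neg hij.symm, if_true]
  split_ifs with hmi hmj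
  · subst hmi
    linear_combination x m * hcs
  · subst hmj
    linear_combination x m * hcs
  · rfl

theorem planeRot_apply_eq_zero_of_notMem {S : Finset ι} {x : EuclideanSpace ℝ ι}
    (hx : ∀ m ∉ S, x m = 0) (hij : i ∈ S ↔ j ∈ S) (hm : m ∉ S) : planeRot i j c s x m = 0 := by
  rw [planeRot_apply]
  split_ifs with hmi hmj
  · subst hmi
    rw [hx m hm, hx j (hij.not.1 hm)]
    ring
  · subst hmj
    rw [hx m hm, hx i (hij.not.2 hm)]
    ring
  · exact hx m hm

variable [Fintype ι]

theorem inner_planeRot (hij : i ≠ j) (hcs : c ^ 2 + s ^ 2 = 1) (x y : EuclideanSpace ℝ ι) :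
    ⟪planeRot i j c s x, planeRot i j c s y⟫ = ⟪x, y⟫ := by
  have split_sum (f : ι → ℝ) : ∑ m, f m = f i + f j + ∑ m ∈ (Finset.univ.erase i).erase j, f m := by
    rw [add_assoc, Finset.add_sum_erase _ _ (Finset.mem_erase.2 ⟨hij.symm, Finset.mem_univ j⟩),
      Finset.add_sum_erase _ _ (Finset.mem_univ i)]
  simp only [PiLp.inner_apply, RCLike.inner_apply, conj_trivial]
  rw [split_sum, split_sum, planeRot_apply_left, planeRot_apply_left, planeRot_apply_right hij,
    planeRot_apply_right hij]
  congr 1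
  · linear_combination (x i * y i + x j * y j) * hcs
  · refine Finset.sum_congr rfl fun m hm => ?_
    obtain ⟨hmj, hm⟩ := Finset.mem_erase.1 hm
    rw [planeRot_apply_of_ne (Finset.ne_of_mem_erase hm) hmj,
      planeRot_apply_of_ne (Finset.ne_of_mem_erase hm) hmj]

def planeRotIsometry (hij : i ≠ j) (hcs : c ^ 2 + s ^ 2 = 1) :
    EuclideanSpace ℝ ι ≃ₗᵢ[ℝ] EuclideanSpace ℝ ι :=
  LinearEquiv.isometryOfInner
    { planeRot i j c s with
      invFun := planeRot i j c (-s)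
      left_inv := planeRot_neg_planeRot hij hcs
      right_inv := fun x => by
        simpa using planeRot_neg_planeRot (s := -s) hij (by rwa [neg_sq]) x }
    (inner_planeRot hij hcs)

theorem eq_norm_smul_single {x : EuclideanSpace ℝ ι} (hx : ∀ m ≠ i, x m = 0) (hi : 0 ≤ x i) :
    x = ‖x‖ • EuclideanSpace.single i 1 := by
  have hx_single : x = EuclideanSpace.single i (x i) := by
    ext m
    by_cases hm : m = i
    · subst hm; simp
    · simp [hx m hm, hm]
  have hnorm : ‖x‖ = x i := by
    rw [congrArg norm hx_single, PiLp.norm_single, Real.norm_of_nonneg hi]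
  rw [hnorm]
  ext m
  by_cases hm : m = i
  · subst hm; simp
  · simp [hx m hm, hm]

end EuclideanSpace

theorem exists_rotation_eq_zero (a b : ℝ) :
    ∃ c s : ℝ, c ^ 2 + s ^ 2 = 1 ∧ -s * a + c * b = 0 ∧ 0 ≤ c * a + s * b := by
  set z : ℂ := ⟨a, b⟩
  have ha : a = ‖z‖ * Real.cos z.arg := (Complex.norm_mul_cos_arg z).symm
  have hb : b = ‖z‖ * Real.sin z.arg := (Complex.norm_mul_sin_arg z).symm
  have hcs := Real.cos_sq_add_sin_sq z.arg
  refine ⟨Real.cos z.arg, Real.sin z.arg, hcs, by rw [ha, hb]; ring, ?_⟩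
  calc 0 ≤ ‖z‖ := norm_nonneg z
    _ = Real.cos z.arg * a + Real.sin z.arg * b := by rw [ha, hb]; linear_combination -‖z‖ * hcs

instance LinearIsometryEquiv.applyMulAction {R E : Type*} [Semiring R]
    [SeminormedAddCommGroup E] [Module R E] : MulAction (E ≃ₗᵢ[R] E) E where
  smul A x := A x
  one_smul _ := rfl
  mul_smul _ _ _ := rfl

def G2 : Subgroup (E7 ≃ₗᵢ[ℝ] E7) where
  carrier := {A | ∀ x y z, phi0 (A x) (A y) (A z) = phi0 x y z}
  one_mem' _ _ _ := rfl
  mul_mem' {A B} hA hB x y z := (hA (B x) (B y) (B z)).trans (hB x y z)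
  inv_mem' {A} hA x y z := by
    rw [← hA, LinearIsometryEquiv.inv_def, A.apply_symm_apply, A.apply_symm_apply,
      A.apply_symm_apply]

open EuclideanSpace

/-- Triples `(k, a, b)` such that `{0, k, a, b}` is the complement of the (0-indexed) index set
`{i, j, l}` of a term `triDet _ _ _ i j l` of `phi0`. -/
def g2Planes : Finset (Fin 7 × Fin 7 × Fin 7) :=
  {(1, 3, 6), (3, 5, 2), (2, 6, 4), (5, 2, 3), (4, 5, 1), (6, 1, 3)}

theorem ne_of_mem_g2Planes {k a b : Fin 7} (h : (k, a, b) ∈ g2Planes) :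
    0 ≠ k ∧ a ≠ b ∧ 0 ≠ a ∧ 0 ≠ b := by
  revert k a b
  decide

theorem phi0_planeRot_planeRot {k a b : Fin 7} (hkab : (k, a, b) ∈ g2Planes) {c s : ℝ}
    (hcs : c ^ 2 + s ^ 2 = 1) (x y z : E7) :
    phi0 (planeRot a b c s (planeRot 0 k c s x)) (planeRot a b c s (planeRot 0 k c s y))
      (planeRot a b c s (planeRot 0 k c s z)) = phi0 x y z := by
  -- for arbitrary `c, s` the left side is affine in `c² + s²`, so its value at `c = s = 0`
  -- supplies the coefficient of `c² + s² - 1`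
  linear_combination (norm := skip) (phi0 x y z - phi0 (planeRot a b 0 0 (planeRot 0 k 0 0 x))
    (planeRot a b 0 0 (planeRot 0 k 0 0 y)) (planeRot a b 0 0 (planeRot 0 k 0 0 z))) * hcs
  simp only [g2Planes, Finset.mem_insert, Finset.mem_singleton, Prod.mk.injEq] at hkab
  rcases hkab with ⟨rfl, rfl, rfl⟩ | ⟨rfl, rfl, rfl⟩ | ⟨rfl, rfl, rfl⟩ | ⟨rfl, rfl, rfl⟩ |
    ⟨rfl, rfl, rfl⟩ | ⟨rfl, rfl, rfl⟩ <;>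
  · simp only [phi0, triDet, Matrix.det_fin_three, Matrix.of_apply, Matrix.cons_val',
      Matrix.cons_val_zero, Matrix.cons_val_one, Matrix.cons_val_two, Matrix.head_cons,
      Matrix.tail_cons, Matrix.empty_val', Matrix.cons_val_fin_one, Matrix.head_fin_const,
      planeRot_apply, Fin.reduceEq, if_true, if_false]
    ring

theorem exists_mem_orbit_G2_vanishing_off_erase {k a b : Fin 7} (hkab : (k, a, b) ∈ g2Planes)
    {S : Finset (Fin 7)} (h0 : 0 ∈ S) (hk : k ∈ S) (hab : a ∈ S.erase k ↔ b ∈ S.erase k)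
    {u : E7} (hu : ∀ m ∉ S, u m = 0) :
    ∃ w ∈ MulAction.orbit G2 u, (∀ m ∉ S.erase k, w m = 0) ∧ 0 ≤ w 0 := by
  obtain ⟨h0k, hab', h0a, h0b⟩ := ne_of_mem_g2Planes hkab
  obtain ⟨c, s, hcs, huk, hu0⟩ := exists_rotation_eq_zero (u 0) (u k)
  set v := planeRot 0 k c s u
  have hv : ∀ m ∉ S.erase k, v m = 0 := by
    intro m hm
    by_cases hmk : m = k
    · rw [hmk, planeRot_apply_right h0k, huk]
    · exact planeRot_apply_eq_zero_of_notMem hu (iff_of_true h0 hk)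
        fun hmS => hm (Finset.mem_erase.2 ⟨hmk, hmS⟩)
  let g : G2 := ⟨planeRotIsometry hab' hcs * planeRotIsometry h0k hcs,
    phi0_planeRot_planeRot hkab hcs⟩
  refine ⟨planeRot a b c s v, ⟨g, rfl⟩, fun m hm => planeRot_apply_eq_zero_of_notMem hv hab hm, ?_⟩
  rw [planeRot_apply_of_ne h0a h0b, planeRot_apply_left]
  exact hu0

theorem norm_smul_single_zero_mem_orbit_G2 (u : E7) :
    ‖u‖ • EuclideanSpace.single 0 1 ∈ MulAction.orbit G2 u := by
  obtain ⟨u₁, h₁, s₁, -⟩ := exists_mem_orbit_G2_vanishing_off_erase (k := 1) (a := 3) (b := 6)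
    (S := Finset.univ) (u := u) (by decide) (by decide) (by decide) (by decide) (by simp)
  obtain ⟨u₂, h₂, s₂, -⟩ := exists_mem_orbit_G2_vanishing_off_erase (k := 3) (a := 5) (b := 2)
    (by decide) (by decide) (by decide) (by decide) s₁
  obtain ⟨u₃, h₃, s₃, -⟩ := exists_mem_orbit_G2_vanishing_off_erase (k := 2) (a := 6) (b := 4)
    (by decide) (by decide) (by decide) (by decide) s₂
  obtain ⟨u₄, h₄, s₄, -⟩ := exists_mem_orbit_G2_vanishing_off_erase (k := 5) (a := 2) (b := 3)
    (by decide) (by decide) (by decide) (by decide) s₃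
  obtain ⟨u₅, h₅, s₅, -⟩ := exists_mem_orbit_G2_vanishing_off_erase (k := 4) (a := 5) (b := 1)
    (by decide) (by decide) (by decide) (by decide) s₄
  obtain ⟨u₆, h₆, s₆, hu₆₀⟩ := exists_mem_orbit_G2_vanishing_off_erase (k := 6) (a := 1) (b := 3)
    (by decide) (by decide) (by decide) (by decide) s₅
  have hu₆_mem : u₆ ∈ MulAction.orbit G2 u := by
    rw [← MulAction.orbit_eq_iff.2 h₁, ← MulAction.orbit_eq_iff.2 h₂, ← MulAction.orbit_eq_iff.2 h₃,
      ← MulAction.orbit_eq_iff.2 h₄, ← MulAction.orbit_eq_iff.2 h₅]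
    exact h₆
  have hnorm : ‖u₆‖ = ‖u‖ := by
    obtain ⟨g, rfl⟩ := hu₆_mem
    exact g.1.norm_map u
  rw [← hnorm, ← eq_norm_smul_single (fun m hm => s₆ m (by revert m; decide)) hu₆₀]
  exact hu₆_mem

theorem mem_orbit_G2_of_norm_eq {u v : E7} (h : ‖u‖ = ‖v‖) : v ∈ MulAction.orbit G2 u := by
  have hu := MulAction.orbit_eq_iff.2 (norm_smul_single_zero_mem_orbit_G2 u)
  have hv := MulAction.orbit_eq_iff.2 (norm_smul_single_zero_mem_orbit_G2 v)
  rw [h] at hu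
  exact MulAction.orbit_eq_iff.1 (hv.symm.trans hu)

/-- `G₂` acts transitively on the unit sphere `S⁶ ⊂ ℝ⁷`: for any unit vectors `u, v`
there is a linear isometry `A` of `(ℝ⁷, g₀)` with `A u = v` preserving `φ₀`. -/
theorem statement15 (u v : E7) (hu : ‖u‖ = 1) (hv : ‖v‖ = 1) :
    ∃ A : E7 ≃ₗᵢ[ℝ] E7, A u = v ∧
      ∀ x y z : E7, phi0 (A x) (A y) (A z) = phi0 x y z := by
  obtain ⟨⟨A, hA⟩, hAu⟩ := mem_orbit_G2_of_norm_eq (hu.trans hv.symm)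
  exact ⟨A, hAu, hA⟩
end
end

section
/- If a nondegenerate lattice W admits a primitive embedding into a unimodular lattice L (an injective map preserving the bilinear forms whose image is a primitive submodule of L), then rk W + ℓ(W) ≤ rk L, where ℓ(W) is the minimal number of generators of the discriminant group W*/W. -/
/-!
Put `R = f(W)` and `Q = L/R`. Primitivity makes `Q` torsion-free, hence free of rank
`rk L - rk W`, so `R` is a direct summand of `L`. Every functional on `W` therefore extends
to `L`, and by unimodularity is `⟨x, f(·)⟩` for some `x ∈ L`: restriction `L → W*` is onto.
It sends `R` into the image of `W`, so it induces a surjection `Q ↠ W*/W`, and the images of a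
basis of `Q` generate `W*/W`.
-/

open Function Module

theorem Submodule.isTorsionFree_quotient {R M : Type*} [Ring R] [Nontrivial R]
    [AddCommGroup M] [Module R M] (N : Submodule R M)
    (hN : ∀ (r : R) (x : M), r ≠ 0 → r • x ∈ N → x ∈ N) :
    IsTorsionFree R (M ⧸ N) := by
  refine .of_smul_eq_zero fun r q hrq => or_iff_not_imp_left.mpr fun hr => ?_
  obtain ⟨x, rfl⟩ := N.mkQ_surjective q
  rw [← map_smul, mkQ_apply, Quotient.mk_eq_zero] at hrq
  rw [mkQ_apply, Quotient.mk_eq_zero]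
  exact hN r x hr hrq

theorem LinearMap.exists_leftInverse_of_injective_of_projective {R M N : Type*} [Ring R]
    [AddCommGroup M] [Module R M] [AddCommGroup N] [Module R N] (f : M →ₗ[R] N)
    (hf : Injective f) [Projective R (N ⧸ range f)] :
    ∃ p : N →ₗ[R] M, p ∘ₗ f = id :=
  ((f.exact_map_mkQ_range.split_tfae hf (range f).mkQ_surjective).out 0 1).mp <|
    (range f).mkQ.exists_rightInverse_of_surjective (range f).range_mkQ

theorem LinearMap.compl₂_surjective_of_leftInverse {R M N P : Type*} [CommSemiring R]
    [AddCommMonoid M] [Module R M] [AddCommMonoid N] [Module R N] [AddCommMonoid P]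
    [Module R P] (B : N →ₗ[R] N →ₗ[R] P) (hB : Surjective B) (f : M →ₗ[R] N)
    (p : N →ₗ[R] M) (hp : p ∘ₗ f = id) :
    Surjective (B.compl₂ f) := by
  intro φ
  obtain ⟨x, hx⟩ := hB (φ ∘ₗ p)
  refine ⟨x, ext fun w => ?_⟩
  rw [compl₂_apply, hx, comp_apply, ← comp_apply p f, hp, id_apply]

theorem AddSubgroup.exists_fin_finrank_closure_eq_top_of_surjective {Q A : Type*}
    [AddCommGroup Q] [Module.Free ℤ Q] [Module.Finite ℤ Q] [AddCommGroup A]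
    (ψ : Q →+ A) (hψ : Surjective ψ) :
    ∃ g : Fin (finrank ℤ Q) → A, closure (Set.range g) = ⊤ := by
  let b := finBasis ℤ Q
  refine ⟨ψ ∘ b, ?_⟩
  have hb : closure (Set.range b) = ⊤ := by
    rw [← Submodule.span_int_eq_addSubgroupClosure, b.span_eq, Submodule.top_toAddSubgroup]
  rw [Set.range_comp, ← AddMonoidHom.map_closure, hb, ← AddMonoidHom.range_eq_map,
    AddMonoidHom.range_eq_top.mpr hψ]

theorem statement17_general
    (W : Type*) [AddCommGroup W] [Module ℤ W]
    (L : Type*) [AddCommGroup L] [Module ℤ L] [Module.Finite ℤ L]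
    (BW : W →ₗ[ℤ] W →ₗ[ℤ] ℤ)
    (BL : L →ₗ[ℤ] L →ₗ[ℤ] ℤ)
    (hLunimod : Function.Bijective fun x : L => BL x)
    (f : W →ₗ[ℤ] L) (hf : Function.Injective f)
    (hcompat : ∀ x y : W, BL (f x) (f y) = BW x y)
    (hprim : ∀ (n : ℤ) (x : L), n ≠ 0 → n • x ∈ LinearMap.range f →
      x ∈ LinearMap.range f)
    (ell : ℕ)
    (hell : IsLeast {k : ℕ | ∃ g : Fin k → ((W →ₗ[ℤ] ℤ) ⧸ LinearMap.range BW),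
      AddSubgroup.closure (Set.range g) = ⊤} ell) :
    Module.finrank ℤ W + ell ≤ Module.finrank ℤ L := by
  -- `L ⧸ f(W)` has two `ℤ`-module structures, the quotient one and `AddCommGroup.toIntModule`;
  -- they are definitionally equal once the structure on `L` is the canonical one.
  obtain rfl : ‹Module ℤ L› = AddCommGroup.toIntModule L := Subsingleton.elim _ _
  have := (LinearMap.range f).isTorsionFree_quotient hprim
  obtain ⟨p, hp⟩ := f.exists_leftInverse_of_injective_of_projective hf
  have hrestrict : Surjective (BL.compl₂ f) :=
    BL.compl₂_surjective_of_leftInverse hLunimod.2 f p hp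
  let θ := (LinearMap.range BW).mkQ ∘ₗ BL.compl₂ f
  have hθ : LinearMap.range f ≤ LinearMap.ker θ := by
    rintro _ ⟨w, rfl⟩
    rw [LinearMap.mem_ker, LinearMap.comp_apply, Submodule.mkQ_apply,
      Submodule.Quotient.mk_eq_zero]
    exact ⟨w, LinearMap.ext fun y => (hcompat w y).symm⟩
  have hψ : Surjective ((LinearMap.range f).liftQ θ hθ) := by
    rw [← LinearMap.range_eq_top, Submodule.range_liftQ, LinearMap.range_eq_top]
    exact (LinearMap.range BW).mkQ_surjective.comp hrestrict
  obtain ⟨g, hg⟩ := AddSubgroup.exists_fin_finrank_closure_eq_top_of_surjective _ hψ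
  calc finrank ℤ W + ell ≤ finrank ℤ W + finrank ℤ (L ⧸ LinearMap.range f) :=
        Nat.add_le_add_left (hell.2 ⟨g, hg⟩) _
    _ = finrank ℤ L := by
        rw [add_comm, ← LinearMap.finrank_range_of_inj hf,
          Submodule.finrank_quotient_add_finrank]

/-- If a nondegenerate lattice `W` admits a primitive embedding into a unimodular
lattice `L`, then `rk W + ℓ(W) ≤ rk L`, where `ℓ(W)` is the minimal number of
generators of the discriminant group `W*/W = coker(W → Hom(W, ℤ))`. -/
theorem statement17
    (W : Type*) [AddCommGroup W] [Module ℤ W] [Module.Free ℤ W] [Module.Finite ℤ W]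
    (L : Type*) [AddCommGroup L] [Module ℤ L] [Module.Free ℤ L] [Module.Finite ℤ L]
    (BW : W →ₗ[ℤ] W →ₗ[ℤ] ℤ) (hWsymm : ∀ x y : W, BW x y = BW y x)
    (hWnondeg : Function.Injective fun x : W => BW x)
    (BL : L →ₗ[ℤ] L →ₗ[ℤ] ℤ) (hLsymm : ∀ x y : L, BL x y = BL y x)
    (hLunimod : Function.Bijective fun x : L => BL x)
    (f : W →ₗ[ℤ] L) (hf : Function.Injective f)
    (hcompat : ∀ x y : W, BL (f x) (f y) = BW x y)
    (hprim : ∀ (n : ℤ) (x : L), n ≠ 0 → n • x ∈ LinearMap.range f →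
      x ∈ LinearMap.range f)
    (ell : ℕ)
    (hell : IsLeast {k : ℕ | ∃ g : Fin k → ((W →ₗ[ℤ] ℤ) ⧸ LinearMap.range BW),
      AddSubgroup.closure (Set.range g) = ⊤} ell) :
    Module.finrank ℤ W + ell ≤ Module.finrank ℤ L :=
  statement17_general W L BW BL hLunimod f hf hcompat hprim ell hell
end

section
/- Let L be a unimodular lattice and N₊, N₋ ⊆ L primitive submodules, with orthogonal complements T₊ = N₊^⊥ and T₋ = N₋^⊥. Then there are isomorphisms of abelian groups L/(N₊ + N₋) ≅ coker(N₊ → Hom(T₋, ℤ)) ≅ coker(N₋ → Hom(T₊, ℤ)) and L/(N₊ + T₋) ≅ coker(N₊ → Hom(N₋, ℤ)) ≅ coker(T₋ → Hom(T₊, ℤ)), where in each case the map sends an element n to the linear functional ⟨n, ·⟩ restricted to the indicated sublattice. -/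
noncomputable section

variable {L : Type*} [AddCommGroup L] [Module ℤ L]

/-- The natural map `A → Hom(C, ℤ)`, `a ↦ ⟨a, ·⟩|_C`, for submodules `A, C ⊆ L`. -/
def resHom (B : L →ₗ[ℤ] L →ₗ[ℤ] ℤ) (A C : Submodule ℤ L) : ↥A →+ (↥C →+ ℤ) :=
  AddMonoidHom.mk' (fun a => AddMonoidHom.mk' (fun c => B a c) (fun c c' => by simp))
    (fun a a' => by ext c; simp)

/-- The cokernel of the natural map `A → Hom(C, ℤ)`. -/
def cokerRes (B : L →ₗ[ℤ] L →ₗ[ℤ] ℤ) (A C : Submodule ℤ L) : Type _ :=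
  (↥C →+ ℤ) ⧸ (resHom B A C).range

instance (B : L →ₗ[ℤ] L →ₗ[ℤ] ℤ) (A C : Submodule ℤ L) : AddCommGroup (cokerRes B A C) :=
  QuotientAddGroup.Quotient.addCommGroup _

/-!
If `C ⊆ L` is primitive, `L/C` is free, so `C` is a direct summand and every functional on `C`
extends to `L`; by unimodularity it is then `⟨x, ·⟩|_C`. Hence `x ↦ ⟨x, ·⟩|_C` maps `L` onto
`Hom(C, ℤ)` with kernel `C^⊥` and induces `L/(A + C^⊥) ≅ coker(A → Hom(C, ℤ))` for every `A ⊆ L`.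
Orthogonal complements are primitive, and `T^⊥ = N` when `N` is primitive and `T = N^⊥`: a
functional on the free module `L/N` not vanishing at `x ∉ N` is `⟨y, ·⟩` with `y ∈ T`. The four
isomorphisms are the cases `(A, C) = (N₊, T₋), (N₋, T₊), (N₊, N₋), (T₋, T₊)`.
-/

open Function Module

namespace QuotientAddGroup

variable {G H : Type*} [AddCommGroup G] [AddCommGroup H]

def quotientSupKerEquivOfSurjective (φ : G →+ H) (hφ : Surjective φ) (A : AddSubgroup G) :
    G ⧸ (A ⊔ φ.ker) ≃+ H ⧸ A.map φ :=
  (quotientAddEquivOfEq (by rw [← AddMonoidHom.comap_ker, ker_mk', AddSubgroup.comap_map_eq])).trans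
    (quotientKerEquivOfSurjective ((mk' (A.map φ)).comp φ) ((mk'_surjective _).comp hφ))

end QuotientAddGroup

namespace Submodule

section Ring

variable {R M : Type*} [Ring R] [AddCommGroup M] [Module R M]

def IsPrimitive (N : Submodule R M) : Prop :=
  ∀ (r : R) (x : M), r ≠ 0 → r • x ∈ N → x ∈ N

theorem IsPrimitive.isTorsionFree_quotient [Nontrivial R] {N : Submodule R M}
    (hN : N.IsPrimitive) : IsTorsionFree R (M ⧸ N) := by
  refine .of_smul_eq_zero fun r x hrx => or_iff_not_imp_left.2 fun hr => ?_
  obtain ⟨x, rfl⟩ := N.mkQ_surjective x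
  rw [← map_smul, mkQ_apply, Quotient.mk_eq_zero] at hrx
  exact (Quotient.mk_eq_zero N).2 (hN r x hr hrx)

theorem exists_extend_of_projective_quotient {P : Type*} [AddCommGroup P] [Module R P]
    (N : Submodule R M) [Projective R (M ⧸ N)] (f : N →ₗ[R] P) :
    ∃ g : M →ₗ[R] P, g ∘ₗ N.subtype = f := by
  obtain ⟨s, hs⟩ : ∃ s : M ⧸ N →ₗ[R] M, N.mkQ ∘ₗ s = LinearMap.id :=
    projective_lifting_property N.mkQ LinearMap.id N.mkQ_surjective
  obtain ⟨l, hl⟩ : ∃ l : M →ₗ[R] N, l ∘ₗ N.subtype = LinearMap.id :=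
    (((LinearMap.exact_subtype_mkQ N).split_tfae N.injective_subtype N.mkQ_surjective).out 0 1).mp
      (Exists.intro s hs)
  exact ⟨f ∘ₗ l, by rw [LinearMap.comp_assoc, hl, LinearMap.comp_id]⟩

end Ring

variable {R M : Type*} [CommRing R] [AddCommGroup M] [Module R M]

theorem IsPrimitive.free_quotient [IsDomain R] [IsPrincipalIdealRing R] [Module.Finite R M]
    {N : Submodule R M} (hN : N.IsPrimitive) : Module.Free R (M ⧸ N) :=
  have := hN.isTorsionFree_quotient
  inferInstance

variable (B : M →ₗ[R] M →ₗ[R] R) {N T : Submodule R M}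

theorem isPrimitive_of_forall_mem_iff [NoZeroDivisors R]
    (hT : ∀ x, x ∈ T ↔ ∀ n ∈ N, B x n = 0) : T.IsPrimitive := by
  intro r x hr hrx
  rw [hT] at hrx ⊢
  intro n hn
  have hrxn := hrx n hn
  rw [map_smul, LinearMap.smul_apply, smul_eq_mul] at hrxn
  exact (mul_eq_zero.1 hrxn).resolve_left hr

theorem mem_iff_forall_mem_orthogonal [Projective R (M ⧸ N)] (hB : Surjective B)
    (hsymm : ∀ x y, B x y = B y x) (hT : ∀ x, x ∈ T ↔ ∀ n ∈ N, B x n = 0) (x : M) :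
    x ∈ N ↔ ∀ t ∈ T, B x t = 0 := by
  refine ⟨fun hx t ht => hsymm x t ▸ (hT t).1 ht x hx, fun hxT => ?_⟩
  by_contra hx
  obtain ⟨φ, hφ⟩ := Projective.exists_dual_ne_zero R ((Quotient.mk_eq_zero N).not.2 hx)
  obtain ⟨y, hy⟩ := hB (φ ∘ₗ N.mkQ)
  have hyT : y ∈ T := (hT y).2 fun n hn => by
    rw [hy, LinearMap.comp_apply, mkQ_apply, (Quotient.mk_eq_zero N).2 hn, map_zero]
  apply hφ
  rw [← hxT y hyT, hsymm, hy]
  rfl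

end Submodule

open Submodule

variable {Λ : Type*} [AddCommGroup Λ]

def restrictDual (B : Λ →ₗ[ℤ] Λ →ₗ[ℤ] ℤ) (C : Submodule ℤ Λ) : Λ →+ (C →+ ℤ) :=
  AddMonoidHom.mk' (fun x => AddMonoidHom.mk' (fun c => B x c) (fun c c' => by simp))
    (fun x x' => by ext c; simp)

variable (B : Λ →ₗ[ℤ] Λ →ₗ[ℤ] ℤ)

theorem restrictDual_surjective [Module.Finite ℤ Λ] (hB : Surjective B) {C : Submodule ℤ Λ}
    (hC : C.IsPrimitive) : Surjective (restrictDual B C) := by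
  have := hC.free_quotient
  intro f
  obtain ⟨g, hg⟩ := C.exists_extend_of_projective_quotient f.toIntLinearMap
  obtain ⟨x, rfl⟩ := hB g
  exact ⟨x, AddMonoidHom.ext fun c => LinearMap.congr_fun hg c⟩

theorem nonempty_quotient_sup_addEquiv_cokerRes (A C K : Submodule ℤ Λ)
    (hsurj : Surjective (restrictDual B C)) (hK : ∀ x, x ∈ K ↔ ∀ c ∈ C, B x c = 0) :
    Nonempty ((Λ ⧸ (A ⊔ K)) ≃+ cokerRes B A C) := by
  have hker : (restrictDual B C).ker = K.toAddSubgroup := by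
    ext x
    simp [hK, restrictDual, AddMonoidHom.ext_iff]
  have hrange : (resHom B A C).range = A.toAddSubgroup.map (restrictDual B C) := by
    rw [show resHom B A C = (restrictDual B C).comp A.subtype.toAddMonoidHom from rfl,
      AddMonoidHom.range_comp]
    congr 1
    ext x
    simp
  exact ⟨(QuotientAddGroup.quotientAddEquivOfEq (by rw [sup_toAddSubgroup, hker])).trans
    ((QuotientAddGroup.quotientSupKerEquivOfSurjective _ hsurj _).trans
      (QuotientAddGroup.quotientAddEquivOfEq hrange.symm))⟩

theorem statement18_general [Module.Finite ℤ L]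
    (B : L →ₗ[ℤ] L →ₗ[ℤ] ℤ)
    (hsymm : ∀ x y : L, B x y = B y x)
    (hunimod : Function.Bijective fun x : L => B x)
    (Np Nm Tp Tm : Submodule ℤ L)
    (hNp : ∀ (n : ℤ) (x : L), n ≠ 0 → n • x ∈ Np → x ∈ Np)
    (hNm : ∀ (n : ℤ) (x : L), n ≠ 0 → n • x ∈ Nm → x ∈ Nm)
    (hTp : ∀ x : L, x ∈ Tp ↔ ∀ n ∈ Np, B x n = 0)
    (hTm : ∀ x : L, x ∈ Tm ↔ ∀ n ∈ Nm, B x n = 0) :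
    Nonempty ((L ⧸ (Np ⊔ Nm)) ≃+ cokerRes B Np Tm) ∧
    Nonempty ((L ⧸ (Np ⊔ Nm)) ≃+ cokerRes B Nm Tp) ∧
    Nonempty ((L ⧸ (Np ⊔ Tm)) ≃+ cokerRes B Np Nm) ∧
    Nonempty ((L ⧸ (Np ⊔ Tm)) ≃+ cokerRes B Tm Tp) := by
  -- `Module ℤ L` is unique; with the canonical one, `n • x` in `hNp` is the module action.
  obtain rfl : ‹Module ℤ L› = AddCommGroup.toIntModule L := Subsingleton.elim _ _
  have hNp : Np.IsPrimitive := hNp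
  have hNm : Nm.IsPrimitive := hNm
  have := hNp.free_quotient
  have := hNm.free_quotient
  have hsurjTp := restrictDual_surjective B hunimod.2 (isPrimitive_of_forall_mem_iff B hTp)
  have hsurjTm := restrictDual_surjective B hunimod.2 (isPrimitive_of_forall_mem_iff B hTm)
  have hsurjNm := restrictDual_surjective B hunimod.2 hNm
  have hNpTp := mem_iff_forall_mem_orthogonal B hunimod.2 hsymm hTp
  have hNmTm := mem_iff_forall_mem_orthogonal B hunimod.2 hsymm hTm
  refine ⟨nonempty_quotient_sup_addEquiv_cokerRes B Np Tm Nm hsurjTm hNmTm, ?_,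
    nonempty_quotient_sup_addEquiv_cokerRes B Np Nm Tm hsurjNm hTm, ?_⟩
  · rw [sup_comm]
    exact nonempty_quotient_sup_addEquiv_cokerRes B Nm Tp Np hsurjTp hNpTp
  · rw [sup_comm]
    exact nonempty_quotient_sup_addEquiv_cokerRes B Tm Tp Np hsurjTp hNpTp

/-- Let `L` be a unimodular lattice and `N₊, N₋ ⊆ L` primitive submodules, with
orthogonal complements `T₊ = N₊^⊥`, `T₋ = N₋^⊥`.  Then
`L/(N₊ + N₋) ≅ coker(N₊ → Hom(T₋, ℤ)) ≅ coker(N₋ → Hom(T₊, ℤ))` and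
`L/(N₊ + T₋) ≅ coker(N₊ → Hom(N₋, ℤ)) ≅ coker(T₋ → Hom(T₊, ℤ))` as abelian groups. -/
theorem statement18 [Module.Free ℤ L] [Module.Finite ℤ L]
    (B : L →ₗ[ℤ] L →ₗ[ℤ] ℤ)
    (hsymm : ∀ x y : L, B x y = B y x)
    (hunimod : Function.Bijective fun x : L => B x)
    (Np Nm Tp Tm : Submodule ℤ L)
    (hNp : ∀ (n : ℤ) (x : L), n ≠ 0 → n • x ∈ Np → x ∈ Np)
    (hNm : ∀ (n : ℤ) (x : L), n ≠ 0 → n • x ∈ Nm → x ∈ Nm)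
    (hTp : ∀ x : L, x ∈ Tp ↔ ∀ n ∈ Np, B x n = 0)
    (hTm : ∀ x : L, x ∈ Tm ↔ ∀ n ∈ Nm, B x n = 0) :
    Nonempty ((L ⧸ (Np ⊔ Nm)) ≃+ cokerRes B Np Tm) ∧
    Nonempty ((L ⧸ (Np ⊔ Nm)) ≃+ cokerRes B Nm Tp) ∧
    Nonempty ((L ⧸ (Np ⊔ Tm)) ≃+ cokerRes B Np Nm) ∧
    Nonempty ((L ⧸ (Np ⊔ Tm)) ≃+ cokerRes B Tm Tp) :=
  statement18_general B hsymm hunimod Np Nm Tp Tm hNp hNm hTp hTm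
end
end

section
/- Let Λ = ℤ³ be equipped with the symmetric bilinear form ⟨·,·⟩ whose Gram matrix in the standard basis is [[4, 4, 7], [4, 0, 1], [7, 1, −2]], and let A = (1, 0, 0). Then: (i) there is no v ∈ Λ with ⟨A, v⟩ = 1 and ⟨v, v⟩ = 0; (ii) there is no v ∈ Λ with ⟨A, v⟩ = 2 and ⟨v, v⟩ = 0; (iii) there is no v ∈ Λ with ⟨A, v⟩ = 0 and ⟨v, v⟩ = −2. -/
/-- The Gram matrix of the lattice `Λ = ℤ³`. -/
def gram : Matrix (Fin 3) (Fin 3) ℤ := !![4, 4, 7; 4, 0, 1; 7, 1, -2]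

/-- The symmetric bilinear form on `Λ = ℤ³` with Gram matrix `[[4,4,7],[4,0,1],[7,1,-2]]`. -/
def bf (u v : Fin 3 → ℤ) : ℤ := dotProduct u (gram.mulVec v)

/-- The class `A = (1, 0, 0)`. -/
def Avec : Fin 3 → ℤ := ![1, 0, 0]

/-!
Since `A² = 4 > 0`, the form is negative definite on `A^⊥`; completing the square gives
`4 (⟨A,v⟩² - 4 v²) = (8x + 2z - 2⟨A,v⟩)² + 84 z²` for `v = (x, y, z)`. In each of the three cases
`⟨A,v⟩² - 4 v² ≤ 8 < 21`, which forces `z = 0`. But for `z = 0` both `⟨A,v⟩ = 4 (x + y)` and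
`v² = 4 x (x + 2y)` are divisible by `4`, and none of the three cases allows that.
-/

lemma bf_Avec_left (v : Fin 3 → ℤ) : bf Avec v = 4 * v 0 + 4 * v 1 + 7 * v 2 := by
  simp [bf, gram, Avec, Matrix.mulVec, dotProduct, Fin.sum_univ_three]

lemma bf_self (v : Fin 3 → ℤ) :
    bf v v = 4 * v 0 ^ 2 + 8 * v 0 * v 1 + 14 * v 0 * v 2 + 2 * v 1 * v 2 - 2 * v 2 ^ 2 := by
  simp only [bf, dotProduct, Matrix.mulVec, gram, Matrix.of_apply, Matrix.cons_val',
    Matrix.cons_val_fin_one, Fin.sum_univ_three, Matrix.cons_val_zero, Matrix.cons_val_one,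
    Matrix.cons_val]
  ring

lemma bf_completed_square (v : Fin 3 → ℤ) :
    (8 * v 0 + 2 * v 2 - 2 * bf Avec v) ^ 2 + 84 * v 2 ^ 2 =
      4 * (bf Avec v ^ 2 - 4 * bf v v) := by
  rw [bf_Avec_left, bf_self]
  ring

lemma coord_two_eq_zero_of_sq_bf_Avec_sub_lt {v : Fin 3 → ℤ}
    (h : bf Avec v ^ 2 - 4 * bf v v < 21) : v 2 = 0 := by
  have hsq := bf_completed_square v
  have hlt : v 2 ^ 2 < 1 := by nlinarith [sq_nonneg (8 * v 0 + 2 * v 2 - 2 * bf Avec v)]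
  exact pow_eq_zero_iff two_ne_zero |>.mp (by linarith [sq_nonneg (v 2)])

lemma four_dvd_bf_Avec_and_bf_self_of_coord_two_eq_zero {v : Fin 3 → ℤ} (hz : v 2 = 0) :
    4 ∣ bf Avec v ∧ 4 ∣ bf v v := by
  rw [bf_Avec_left, bf_self, hz]
  exact ⟨⟨v 0 + v 1, by ring⟩, ⟨v 0 * (v 0 + 2 * v 1), by ring⟩⟩

lemma four_dvd_bf_Avec_and_bf_self {v : Fin 3 → ℤ} (h : bf Avec v ^ 2 - 4 * bf v v < 21) :
    4 ∣ bf Avec v ∧ 4 ∣ bf v v :=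
  four_dvd_bf_Avec_and_bf_self_of_coord_two_eq_zero (coord_two_eq_zero_of_sq_bf_Avec_sub_lt h)

/-- In the lattice `Λ = ℤ³` with Gram matrix `[[4,4,7],[4,0,1],[7,1,-2]]` and
`A = (1,0,0)`: (i) there is no `v` with `⟨A, v⟩ = 1` and `v² = 0`; (ii) there is no `v`
with `⟨A, v⟩ = 2` and `v² = 0`; (iii) there is no `v` with `⟨A, v⟩ = 0` and `v² = −2`. -/
theorem statement19 :
    (¬ ∃ v : Fin 3 → ℤ, bf Avec v = 1 ∧ bf v v = 0) ∧
    (¬ ∃ v : Fin 3 → ℤ, bf Avec v = 2 ∧ bf v v = 0) ∧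
    (¬ ∃ v : Fin 3 → ℤ, bf Avec v = 0 ∧ bf v v = -2) := by
  refine ⟨?_, ?_, ?_⟩ <;> rintro ⟨v, hA, hv⟩ <;>
  · have h4 := four_dvd_bf_Avec_and_bf_self (v := v) (by rw [hA, hv]; norm_num)
    rw [hA, hv] at h4
    norm_num at h4
end
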